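/- Soundness of SDKH: for every formula φ of DKH, if φ is provable in the proof system SDKH then φ is valid, i.e., M,s ⊨ φ for every model M and every state s of M. -/

import Mathlib

namespace DKH

/-- Groups of agents: subsets of the finite agent set `I = {i_0, …, i_{n-1}}`. -/
abbrev Grp (n : ℕ) := Finset (Fin n)

/-- The language DKH: φ ::= ⊤ | p | ¬φ | (φ∧φ) | K_G φ | Kh_G φ. -/
inductive Formula (P : Type) (n : ℕ) : Type
  | top  : Formula P n
  | atom : P → Formula P n
  | neg  : Formula P n → Formula P n
  | and  : Formula P n → Formula P n → Formula P n
  | K    : Grp n → Formula P n → Formula P n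
  | Kh   : Grp n → Formula P n → Formula P n

instance {P n} : Inhabited (Formula P n) := ⟨.top⟩

namespace Formula
/-- Defined implication φ → ψ := ¬(φ ∧ ¬ψ). -/
def imp {P n} (φ ψ : Formula P n) : Formula P n := .neg (φ.and ψ.neg)
/-- Defined falsum ⊥ := ¬⊤. -/
def bot {P : Type} {n : ℕ} : Formula P n := .neg .top
end Formula

/-- A model ⟨S, {∼_i}, {A_G}, {→_a}, V⟩. -/
structure KhModel (P : Type) (n : ℕ) where
  State : Type
  Act : Type
  sim : Fin n → State → State → Prop
  sim_equiv : ∀ i, Equivalence (sim i)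
  A : Grp n → Set Act
  A_empty : A ∅ = ∅
  A_disj : ∀ G H : Grp n, G ⊂ H → A G ∩ A H = ∅
  tr : Act → State → State → Prop
  V : P → Set State

/-- Distributed indistinguishability: s ∼_G t iff s ∼_i t for every i ∈ G. -/
def gsim {P n} (M : KhModel P n) (G : Grp n) (s t : M.State) : Prop :=
  ∀ i ∈ G, M.sim i s t

/-- Distributed actions: atomic group actions, or joint tuples ⟨d_0,…,d_k⟩. -/
inductive DAct (Act : Type) : Type
  | atom : Act → DAct Act
  | joint : List (DAct Act) → DAct Act

mutual
/-- Distributed transition relation: →_{⟨d_0,…,d_k⟩} = ⋂_j →_{d_j}. -/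
def dtr {Act State : Type} (tr : Act → State → State → Prop) :
    DAct Act → State → State → Prop
  | .atom a, s, t => tr a s t
  | .joint ds, s, t => dtrList tr ds s t

def dtrList {Act State : Type} (tr : Act → State → State → Prop) :
    List (DAct Act) → State → State → Prop
  | [], _, _ => True
  | d :: ds, s, t => dtr tr d s t ∧ dtrList tr ds s t
end

/-- `Gs` is a partial partition of `G`: a family of nonempty, pairwise disjoint
blocks, all included in `G` (i.e. a partition of a subset of `G`). -/
def PartialPartition {n : ℕ} (G : Grp n) (Gs : List (Grp n)) : Prop :=
  (∀ B ∈ Gs, B ≠ ∅) ∧ Gs.Pairwise (fun B C => Disjoint B C) ∧ (∀ B ∈ Gs, B ⊆ G)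

/-- The fixed ordering on mutually disjoint nonempty groups: G ≺ H iff the
minimal index of an agent in G is below that of H. -/
def grpLt {n : ℕ} (B C : Grp n) : Prop := B.min < C.min

/-- Membership in the set A*_G of distributed actions of group G:
the closure of A^+_G = ⋃_{G'⊆G} A_{G'} under forming joint actions
⟨d_0,…,d_k⟩ ∈ A*_{G_0} × ⋯ × A*_{G_k} for non-trivial partial partitions
{G_0,…,G_k} of G listed in the fixed order ≺. -/
inductive star {n : ℕ} {Act : Type} (A : Grp n → Set Act) : Grp n → DAct Act → Prop
  | base {G G' : Grp n} {a : Act} :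
      G' ⊆ G → a ∈ A G' → star A G (.atom a)
  | joint {G : Grp n} {Gs : List (Grp n)} {ds : List (DAct Act)} :
      2 ≤ Gs.length → PartialPartition G Gs → Gs.Chain' grpLt →
      List.Forall₂ (star A) Gs ds → star A G (.joint ds)

/-- Membership in A^+_G = ⋃_{G'⊆G} A_{G'} (as a set of distributed actions). -/
def inAplus {n : ℕ} {Act : Type} (A : Grp n → Set Act) (G : Grp n) (d : DAct Act) : Prop :=
  ∃ G' : Grp n, G' ⊆ G ∧ ∃ a ∈ A G', d = .atom a

/-- d is executable on X if every s ∈ X has a d-successor. -/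
def ExecutableOn {P n} (M : KhModel P n) (d : DAct M.Act) (X : Set M.State) : Prop :=
  ∀ s ∈ X, ∃ t, dtr M.tr d s t

/-- A strategy of group G: a partial function from ∼_G-equivalence classes to
A*_G such that the prescribed action is executable on the class. -/
structure Strategy {P n} (M : KhModel P n) (G : Grp n) where
  act : M.State → Option (DAct M.Act)
  uniform : ∀ s t, gsim M G s t → act s = act t
  mem_star : ∀ s d, act s = some d → star M.A G d
  exec : ∀ s d, act s = some d → ∀ t, gsim M G s t → ∃ u, dtr M.tr d t u

/-- One step of an execution: [s]_G →_{σ([s]_G)} [t]_G. -/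
def stepRel {P n} {M : KhModel P n} {G : Grp n} (σ : Strategy M G) (s t : M.State) : Prop :=
  ∃ d, σ.act s = some d ∧ ∃ u v, gsim M G s u ∧ gsim M G t v ∧ dtr M.tr d u v

/-- Leaf-nodes of the finite complete executions of σ starting from [s]_G,
as a ∼_G-closed set of states. -/
def CELeaf {P n} {M : KhModel P n} {G : Grp n} (σ : Strategy M G) (s : M.State) :
    Set M.State :=
  {t | ∃ (m : ℕ) (f : ℕ → M.State), gsim M G s (f 0) ∧
    (∀ j < m, stepRel σ (f j) (f (j+1))) ∧ σ.act (f m) = none ∧ gsim M G (f m) t}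

/-- There is an infinite (hence complete) execution of σ starting from [s]_G. -/
def InfiniteFrom {P n} {M : KhModel P n} {G : Grp n} (σ : Strategy M G) (s : M.State) : Prop :=
  ∃ f : ℕ → M.State, gsim M G s (f 0) ∧ ∀ j, stepRel σ (f j) (f (j+1))

/-- Inner-nodes of the complete executions of σ starting from [s]_G,
as a ∼_G-closed set of states. -/
def CEInner {P n} {M : KhModel P n} {G : Grp n} (σ : Strategy M G) (s : M.State) :
    Set M.State :=
  {t | (∃ (m : ℕ) (f : ℕ → M.State), gsim M G s (f 0) ∧
          (∀ j < m, stepRel σ (f j) (f (j+1))) ∧ σ.act (f m) = none ∧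
          ∃ j < m, gsim M G (f j) t) ∨
       (∃ f : ℕ → M.State, gsim M G s (f 0) ∧
          (∀ j, stepRel σ (f j) (f (j+1))) ∧ ∃ j, gsim M G (f j) t)}

/-- Truth at a pointed model. -/
def Sat {P n} (M : KhModel P n) : M.State → Formula P n → Prop
  | _, .top => True
  | s, .atom p => s ∈ M.V p
  | s, .neg φ => ¬ Sat M s φ
  | s, .and φ ψ => Sat M s φ ∧ Sat M s ψ
  | s, .K G φ => ∀ t, gsim M G s t → Sat M t φ
  | s, .Kh G φ => ∃ σ : Strategy M G,
      (∀ t ∈ CELeaf σ s, Sat M t φ) ∧ ¬ InfiniteFrom σ s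

/-- Boolean evaluation treating ⊤, ¬, ∧ as connectives and everything else
as atoms; used to define propositional tautologies. -/
def beval {P n} (v : Formula P n → Bool) : Formula P n → Bool
  | .top => true
  | .atom p => v (.atom p)
  | .neg φ => !(beval v φ)
  | .and φ ψ => beval v φ && beval v ψ
  | .K G φ => v (.K G φ)
  | .Kh G φ => v (.Kh G φ)

/-- Instances of propositional tautologies. -/
def IsTaut {P n} (φ : Formula P n) : Prop := ∀ v, beval v φ = true

/-- The proof system SDKH. -/
inductive Provable {P : Type} {n : ℕ} : Formula P n → Prop
  | taut {φ} : IsTaut φ → Provable φ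
  | distK {G : Grp n} {φ ψ} :
      Provable (((Formula.K G φ).and (Formula.K G (φ.imp ψ))).imp (Formula.K G ψ))
  | axT {G : Grp n} {φ} : Provable ((Formula.K G φ).imp φ)
  | ax4 {G : Grp n} {φ} : Provable ((Formula.K G φ).imp (Formula.K G (Formula.K G φ)))
  | ax5 {G : Grp n} {φ} :
      Provable ((Formula.neg (Formula.K G φ)).imp (Formula.K G (Formula.neg (Formula.K G φ))))
  | axKMono {G H : Grp n} {φ} : G ⊆ H → Provable ((Formula.K G φ).imp (Formula.K H φ))
  | axKhMono {G H : Grp n} {φ} : G ⊆ H → Provable ((Formula.Kh G φ).imp (Formula.Kh H φ))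
  | axKtoKh {G : Grp n} {φ} : Provable ((Formula.K G φ).imp (Formula.Kh G φ))
  | axEmpKhtoK {φ} : Provable ((Formula.Kh ∅ φ).imp (Formula.K ∅ φ))
  | axKhtoKKh {G : Grp n} {φ} : Provable ((Formula.Kh G φ).imp (Formula.K G (Formula.Kh G φ)))
  | axEmpMono {G : Grp n} {φ ψ} :
      Provable ((Formula.K ∅ (φ.imp ψ)).imp (Formula.K ∅ ((Formula.Kh G φ).imp (Formula.Kh G ψ))))
  | axKhbot {G : Grp n} : Provable ((Formula.Kh G Formula.bot).imp Formula.bot)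
  | axKhtoKhK {G : Grp n} {φ} : Provable ((Formula.Kh G φ).imp (Formula.Kh G (Formula.K G φ)))
  | axKhKh {G : Grp n} {φ} : Provable ((Formula.Kh G (Formula.Kh G φ)).imp (Formula.Kh G φ))
  | mp {φ ψ} : Provable (φ.imp ψ) → Provable φ → Provable ψ
  | necK {G : Grp n} {φ} : Provable φ → Provable (Formula.K G φ)

/-- Conjunction of a finite list of formulas. -/
def conj {P n} (L : List (Formula P n)) : Formula P n := L.foldr Formula.and Formula.top

/-- SDKH-consistency of a set of formulas. -/
def Consistent {P n} (X : Set (Formula P n)) : Prop :=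
  ¬ ∃ L : List (Formula P n), (∀ φ ∈ L, φ ∈ X) ∧ Provable ((conj L).imp Formula.bot)

/-- Maximal consistent sets. -/
def MCS {P n} (X : Set (Formula P n)) : Prop :=
  Consistent X ∧ ∀ φ ∉ X, ¬ Consistent (insert φ X)

/-! ### The canonical model -/

/-- One step ⟨(φ,G),H⟩X of a mixed sequence. -/
structure CStep (P : Type) (n : ℕ) where
  fml : Formula P n
  G : Grp n
  H : Grp n
  X : Set (Formula P n)

instance {P n} : Inhabited (CStep P n) := ⟨⟨.top, ∅, ∅, ∅⟩⟩

/-- The conditions on a mixed sequence X_0⟨(φ_1,G_1),H_1⟩X_1⋯⟨(φ_n,G_n),H_n⟩X_n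
(the previous MCS being `X`). -/
def goodFrom {P n} : Set (Formula P n) → List (CStep P n) → Prop
  | _, [] => True
  | X, c :: rest =>
      MCS c.X ∧ c.G ≠ ∅ ∧ (Formula.Kh c.G c.fml) ∈ X ∧ (Formula.K c.G c.fml) ∈ c.X ∧
      (∀ ψ, (Formula.K c.H ψ) ∈ X → ψ ∈ c.X) ∧ goodFrom c.X rest

/-- The final MCS `ed(s)` of a mixed sequence. -/
def edOf {P n} (X0 : Set (Formula P n)) (l : List (CStep P n)) : Set (Formula P n) :=
  l.foldl (fun _ c => c.X) X0

/-- States of the canonical model: mixed sequences starting at X_0. -/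
def CState {P : Type} {n : ℕ} (X0 : Set (Formula P n)) := {l : List (CStep P n) // goodFrom X0 l}

/-- Canonical epistemic relation ∼^c_i. -/
def csim {P n} (X0 : Set (Formula P n)) (i : Fin n) (s t : CState X0) : Prop :=
  ∃ k : ℕ, k ≤ s.1.length ∧ k ≤ t.1.length ∧
    (∀ j < k, (s.1.getD j default).X = (t.1.getD j default).X ∧
              (s.1.getD j default).H = (t.1.getD j default).H) ∧
    (∀ j, k ≤ j → j < s.1.length → i ∈ (s.1.getD j default).H) ∧
    (∀ j, k ≤ j → j < t.1.length → i ∈ (t.1.getD j default).H)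

/-- Canonical atomic actions: pairs (φ, G). -/
abbrev CAct (P : Type) (n : ℕ) := Formula P n × Grp n

/-- Canonical atomic action sets A^c_G = {(φ,G) : φ ∈ DKH} for G ≠ ∅, A^c_∅ = ∅. -/
def cA {P : Type} {n : ℕ} (G : Grp n) : Set (CAct P n) := {a | a.2 = G ∧ G ≠ ∅}

/-- Canonical transition: s →_{(φ,G)} t iff t = s⟨(φ,G),G'⟩X for some G' and MCS X. -/
def ctr {P n} (X0 : Set (Formula P n)) (a : CAct P n) (s t : CState X0) : Prop :=
  ∃ (G' : Grp n) (Y : Set (Formula P n)), MCS Y ∧ t.1 = s.1 ++ [⟨a.1, a.2, G', Y⟩]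

theorem csim_equiv {P n} (X0 : Set (Formula P n)) (i : Fin n) : Equivalence (csim X0 i) := by
  constructor
  · intro s
    exact ⟨s.1.length, le_rfl, le_rfl, fun j _ => ⟨rfl, rfl⟩,
      fun j h1 h2 => absurd h2 (by omega), fun j h1 h2 => absurd h2 (by omega)⟩
  · rintro s t ⟨k, h1, h2, h3, h4, h5⟩
    exact ⟨k, h2, h1, fun j hj => ⟨(h3 j hj).1.symm, (h3 j hj).2.symm⟩, h5, h4⟩
  · rintro s t u ⟨k1, hk1s, hk1t, heq1, hs1, ht1⟩ ⟨k2, hk2t, hk2u, heq2, ht2, hu2⟩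
    refine ⟨min k1 k2, le_trans (min_le_left _ _) hk1s, le_trans (min_le_right _ _) hk2u,
      ?_, ?_, ?_⟩
    · intro j hj
      have e1 := heq1 j (lt_of_lt_of_le hj (min_le_left _ _))
      have e2 := heq2 j (lt_of_lt_of_le hj (min_le_right _ _))
      exact ⟨e1.1.trans e2.1, e1.2.trans e2.2⟩
    · intro j hj hjs
      by_cases h : k1 ≤ j
      · exact hs1 j h hjs
      · have hj2 : k2 ≤ j := by omega
        have hjt : j < t.1.length := by omega
        have := ht2 j hj2 hjt
        have e := (heq1 j (by omega)).2
        rw [e]; exact this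
    · intro j hj hju
      by_cases h : k2 ≤ j
      · exact hu2 j h hju
      · have hj1 : k1 ≤ j := by omega
        have hjt : j < t.1.length := by omega
        have := ht1 j hj1 hjt
        have e := (heq2 j (by omega)).2
        rw [← e]; exact this

theorem cA_empty {P : Type} {n : ℕ} : (cA (P := P) (n := n) ∅) = ∅ := by
  ext a; simp [cA]

theorem cA_disj {P : Type} {n : ℕ} (G H : Grp n) (h : G ⊂ H) :
    cA (P := P) (n := n) G ∩ cA H = ∅ := by
  ext a
  simp only [Set.mem_inter_iff, Set.mem_empty_iff_false, iff_false, cA, Set.mem_setOf_eq]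
  rintro ⟨⟨rfl, -⟩, ⟨h2, -⟩⟩
  exact h.ne h2

/-- The canonical model M^c(X_0). -/
def canonicalModel {P : Type} {n : ℕ} (X0 : Set (Formula P n)) : KhModel P n where
  State := CState X0
  Act := CAct P n
  sim := csim X0
  sim_equiv := csim_equiv X0
  A := cA
  A_empty := cA_empty
  A_disj := cA_disj
  tr := ctr X0
  V := fun p => {s : CState X0 | Formula.atom p ∈ edOf X0 s.1}


/-! Soundness is proved by induction on derivations. The S5 axioms for `K_G` hold because `∼_G`
is an equivalence relation, and most `Kh` axioms are witnessed by the given strategy itself,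
by the same strategy viewed as one of a larger group, or by the empty strategy. `Kh_G ⊥ → ⊥`
holds because a strategy without infinite executions has a leaf (dependent choice).

The only real construction is for `Kh_G Kh_G φ → Kh_G φ`. Given `σ` whose leaves `t` carry
strategies `ξ t` for `φ`, the composite strategy follows, at `u`, the continuation `ξ t` of the
least leaf `t` (in a fixed well-order) whose continuation reaches `u`, and follows `σ` where there
is no such leaf. Along an execution the leaf in charge can only decrease, so it is eventually
constant, and an infinite execution of the composite yields one of `σ` or of a single `ξ t`. -/

theorem IsWellOrder.exists_forall_add_eq {α : Type*} {r : α → α → Prop} [IsWellOrder α r]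
    (a : ℕ → α) (h : ∀ k, ¬ r (a k) (a (k + 1))) : ∃ k₀, ∀ k, a (k₀ + k) = a k₀ := by
  have hwf : WellFounded r := IsWellFounded.wf
  obtain ⟨k₀, hk₀⟩ := hwf.min_mem _ (Set.range_nonempty a)
  refine ⟨k₀, fun k => ?_⟩
  induction k with
  | zero => rfl
  | succ k ih =>
    rcases trichotomous_of r (a (k₀ + k + 1)) (a (k₀ + k)) with hlt | heq | hgt
    · rw [ih, hk₀] at hlt
      exact absurd hlt (hwf.not_lt_min _ (Set.mem_range_self _))
    · exact heq.trans ih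
    · exact absurd hgt (h _)

section Soundness

variable {P : Type} {n : ℕ} {M : KhModel P n} {G : Grp n} {s t u : M.State}

theorem gsim.refl (s : M.State) : gsim M G s s := fun i _ => (M.sim_equiv i).refl s

theorem gsim.symm (h : gsim M G s t) : gsim M G t s := fun i hi => (M.sim_equiv i).symm (h i hi)

theorem gsim.trans (h₁ : gsim M G s t) (h₂ : gsim M G t u) : gsim M G s u :=
  fun i hi => (M.sim_equiv i).trans (h₁ i hi) (h₂ i hi)

theorem gsim.mono {H : Grp n} (hGH : G ⊆ H) (h : gsim M H s t) : gsim M G s t :=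
  fun i hi => h i (hGH hi)

theorem gsim_empty (s t : M.State) : gsim M ∅ s t := fun i hi => absurd hi (Finset.notMem_empty i)

theorem star.mono {Act : Type} {A : Grp n → Set Act} {H : Grp n} (hGH : G ⊆ H) {d : DAct Act}
    (h : star A G d) : star A H d := by
  cases h with
  | base hsub ha => exact star.base (hsub.trans hGH) ha
  | joint hlen hpp hchain hds =>
    exact star.joint hlen ⟨hpp.1, hpp.2.1, fun B hB => (hpp.2.2 B hB).trans hGH⟩ hchain hds

theorem not_star_empty {Act : Type} {A : Grp n → Set Act} (hA : A ∅ = ∅) (d : DAct Act) :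
    ¬ star A ∅ d := by
  intro h
  cases h with
  | base hsub ha =>
    rw [Finset.subset_empty.mp hsub, hA] at ha
    exact ha
  | @joint _ Gs _ hlen hpp _ _ =>
    obtain ⟨B, hB⟩ := List.length_pos_iff_exists_mem.mp (by omega : 0 < Gs.length)
    exact hpp.1 B hB (Finset.subset_empty.mp (hpp.2.2 B hB))

theorem Strategy.act_eq_none_of_empty_group (σ : Strategy M ∅) (u : M.State) : σ.act u = none :=
  Option.eq_none_iff_forall_ne_some.mpr fun d hd => not_star_empty M.A_empty d (σ.mem_star u d hd)

def Strategy.empty (M : KhModel P n) (G : Grp n) : Strategy M G where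
  act _ := none
  uniform _ _ _ := rfl
  mem_star _ _ h := nomatch h
  exec _ _ h := nomatch h

def Strategy.lift {H : Grp n} (hGH : G ⊆ H) (σ : Strategy M G) : Strategy M H where
  act := σ.act
  uniform s t h := σ.uniform s t (h.mono hGH)
  mem_star s d h := (σ.mem_star s d h).mono hGH
  exec s d h t ht := σ.exec s d h t (ht.mono hGH)

section Executions

variable {σ : Strategy M G}

theorem stepRel.congr_left (hst : gsim M G s t) (h : stepRel σ t u) : stepRel σ s u := by
  obtain ⟨d, hd, v, w, htv, huw, hvw⟩ := h
  exact ⟨d, (σ.uniform s t hst).trans hd, v, w, hst.trans htv, huw, hvw⟩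

theorem stepRel.congr_right (h : stepRel σ s t) (htu : gsim M G t u) : stepRel σ s u := by
  obtain ⟨d, hd, v, w, hsv, htw, hvw⟩ := h
  exact ⟨d, hd, v, w, hsv, htu.symm.trans htw, hvw⟩

theorem stepRel.of_act_eq {τ : Strategy M G} (h : stepRel σ s t) (hστ : σ.act s = τ.act s) :
    stepRel τ s t := by
  obtain ⟨d, hd, rest⟩ := h
  exact ⟨d, hστ ▸ hd, rest⟩

theorem stepRel.of_lift {H : Grp n} (hGH : G ⊆ H) (h : stepRel (σ.lift hGH) s t) :
    stepRel σ s t := by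
  obtain ⟨d, hd, v, w, hsv, htw, hvw⟩ := h
  exact ⟨d, hd, v, w, hsv.mono hGH, htw.mono hGH, hvw⟩

theorem not_stepRel_empty : ¬ stepRel (Strategy.empty M G) s t := fun ⟨_, hd, _⟩ => nomatch hd

def reachSet (σ : Strategy M G) (t₀ : M.State) : Set M.State :=
  {t | ∃ (m : ℕ) (f : ℕ → M.State), gsim M G t₀ (f 0) ∧
    (∀ j < m, stepRel σ (f j) (f (j + 1))) ∧ gsim M G (f m) t}

theorem mem_reachSet_self (σ : Strategy M G) (t₀ : M.State) : t₀ ∈ reachSet σ t₀ :=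
  ⟨0, fun _ => t₀, gsim.refl t₀, fun _ hj => absurd hj (Nat.not_lt_zero _), gsim.refl t₀⟩

theorem mem_reachSet_of_gsim (ht : t ∈ reachSet σ s) (htu : gsim M G t u) :
    u ∈ reachSet σ s := by
  obtain ⟨m, f, h0, hf, hm⟩ := ht
  exact ⟨m, f, h0, hf, hm.trans htu⟩

theorem mem_reachSet_of_stepRel (ht : t ∈ reachSet σ s) (htu : stepRel σ t u) :
    u ∈ reachSet σ s := by
  obtain ⟨m, f, h0, hf, hm⟩ := ht
  refine ⟨m + 1, Function.update f (m + 1) u, ?_, fun j hj => ?_, ?_⟩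
  · rwa [Function.update_of_ne (by omega)]
  · rw [Function.update_of_ne (by omega : j ≠ m + 1)]
    rcases Nat.lt_succ_iff_lt_or_eq.mp hj with hj | rfl
    · rw [Function.update_of_ne (by omega)]
      exact hf j hj
    · rw [Function.update_self]
      exact htu.congr_left hm
  · rw [Function.update_self]
    exact gsim.refl u

theorem mem_CELeaf_iff : t ∈ CELeaf σ s ↔ t ∈ reachSet σ s ∧ σ.act t = none := by
  constructor
  · rintro ⟨m, f, h0, hf, hn, hm⟩
    exact ⟨⟨m, f, h0, hf, hm⟩, (σ.uniform _ _ hm).symm.trans hn⟩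
  · rintro ⟨⟨m, f, h0, hf, hm⟩, hn⟩
    exact ⟨m, f, h0, hf, (σ.uniform _ _ hm).trans hn, hm⟩

theorem mem_CELeaf_of_gsim (ht : t ∈ CELeaf σ s) (htu : gsim M G t u) : u ∈ CELeaf σ s := by
  obtain ⟨m, f, h0, hf, hn, hm⟩ := ht
  exact ⟨m, f, h0, hf, hn, hm.trans htu⟩

theorem CELeaf_congr (h : gsim M G s t) : CELeaf σ s = CELeaf σ t := by
  ext u
  constructor <;> rintro ⟨m, f, h0, hf, hn, hm⟩
  · exact ⟨m, f, h.symm.trans h0, hf, hn, hm⟩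
  · exact ⟨m, f, h.trans h0, hf, hn, hm⟩

theorem CELeaf_lift_subset {H : Grp n} (hGH : G ⊆ H) : CELeaf (σ.lift hGH) s ⊆ CELeaf σ s :=
  fun _ ⟨m, f, h0, hf, hn, hm⟩ =>
    ⟨m, f, h0.mono hGH, fun j hj => (hf j hj).of_lift hGH, hn, hm.mono hGH⟩

theorem gsim_of_mem_CELeaf_empty (ht : t ∈ CELeaf (Strategy.empty M G) s) : gsim M G s t := by
  obtain ⟨m, f, h0, hf, -, hm⟩ := ht
  cases m with
  | zero => exact h0.trans hm
  | succ m => exact absurd (hf 0 m.succ_pos) not_stepRel_empty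

theorem infiniteFrom_congr (h : gsim M G s t) : InfiniteFrom σ s ↔ InfiniteFrom σ t := by
  constructor <;> rintro ⟨f, h0, hf⟩
  · exact ⟨f, h.symm.trans h0, hf⟩
  · exact ⟨f, h.trans h0, hf⟩

theorem InfiniteFrom.of_lift {H : Grp n} (hGH : G ⊆ H) (h : InfiniteFrom (σ.lift hGH) s) :
    InfiniteFrom σ s :=
  let ⟨f, h0, hf⟩ := h
  ⟨f, h0.mono hGH, fun j => (hf j).of_lift hGH⟩

theorem InfiniteFrom.of_stepRel (hu : InfiniteFrom σ u) (h : stepRel σ t u) :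
    InfiniteFrom σ t := by
  obtain ⟨f, h0, hf⟩ := hu
  refine ⟨fun | 0 => t | k + 1 => f k, gsim.refl t, ?_⟩
  rintro (_ | j)
  · exact h.congr_right h0
  · exact hf j

theorem InfiniteFrom.of_mem_reachSet (hu : InfiniteFrom σ u) (hsu : u ∈ reachSet σ s) :
    InfiniteFrom σ s := by
  obtain ⟨m, f, h0, hf, hm⟩ := hsu
  have hpath : ∀ j ≤ m, InfiniteFrom σ (f j) := fun _ hj =>
    Nat.decreasingInduction (motive := fun j _ => InfiniteFrom σ (f j))
      (fun k hk ih => ih.of_stepRel (hf k hk)) ((infiniteFrom_congr hm).2 hu) hj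
  exact (infiniteFrom_congr h0).2 (hpath 0 m.zero_le)

theorem exists_mem_CELeaf (hσ : ¬ InfiniteFrom σ s) : (CELeaf σ s).Nonempty := by
  by_contra hleaf
  have hnext : ∀ t : reachSet σ s, ∃ u : reachSet σ s, stepRel σ t u := by
    rintro ⟨t, ht⟩
    obtain ⟨d, hd⟩ := Option.ne_none_iff_exists'.mp fun hn => hleaf ⟨t, mem_CELeaf_iff.2 ⟨ht, hn⟩⟩
    obtain ⟨v, hv⟩ := σ.exec t d hd t (gsim.refl t)
    have hst : stepRel σ t v := ⟨d, hd, t, v, gsim.refl t, gsim.refl v, hv⟩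
    exact ⟨⟨v, mem_reachSet_of_stepRel ht hst⟩, hst⟩
  choose next hnext using hnext
  refine hσ ⟨fun k => (next^[k] ⟨s, mem_reachSet_self σ s⟩).1, gsim.refl s, fun k => ?_⟩
  show stepRel σ (next^[k] _).1 (next^[k + 1] _).1
  rw [Function.iterate_succ_apply']
  exact hnext _

end Executions

section Composition

variable (σ : Strategy M G) (s : M.State) (ξ : M.State → Strategy M G)

def handovers (u : M.State) : Set M.State := {t | t ∈ CELeaf σ s ∧ u ∈ reachSet (ξ t) t}

noncomputable def leastHandover (u : M.State) (h : (handovers σ s ξ u).Nonempty) : M.State :=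
  WellOrderingRel.isWellOrder.wf.min _ h

open Classical in
noncomputable def inCharge (u : M.State) : Strategy M G :=
  if h : (handovers σ s ξ u).Nonempty then ξ (leastHandover σ s ξ u h) else σ

variable {σ s ξ}

theorem leastHandover_mem (h : (handovers σ s ξ u).Nonempty) :
    leastHandover σ s ξ u h ∈ handovers σ s ξ u :=
  WellFounded.min_mem _ _ h

theorem not_lt_leastHandover (h : (handovers σ s ξ u).Nonempty) (ht : t ∈ handovers σ s ξ u) :
    ¬ WellOrderingRel t (leastHandover σ s ξ u h) :=
  WellFounded.not_lt_min _ _ ht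

theorem handovers_congr (h : gsim M G u t) : handovers σ s ξ u = handovers σ s ξ t := by
  ext r
  exact and_congr_right fun _ => ⟨fun hu => mem_reachSet_of_gsim hu h,
    fun ht => mem_reachSet_of_gsim ht h.symm⟩

theorem inCharge_congr (h : gsim M G u t) : inCharge σ s ξ u = inCharge σ s ξ t := by
  unfold inCharge leastHandover
  rw [handovers_congr h]

variable (σ s ξ) in
noncomputable def Strategy.seq : Strategy M G where
  act u := (inCharge σ s ξ u).act u
  uniform u t h := by
    rw [inCharge_congr h]
    exact (inCharge σ s ξ t).uniform u t h
  mem_star u d h := (inCharge σ s ξ u).mem_star u d h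
  exec u d h t ht := (inCharge σ s ξ u).exec u d h t ht

theorem seq_act_of_nonempty (h : (handovers σ s ξ u).Nonempty) :
    (σ.seq s ξ).act u = (ξ (leastHandover σ s ξ u h)).act u := by
  simp only [Strategy.seq, inCharge, dif_pos h]

theorem seq_act_of_not_nonempty (h : ¬ (handovers σ s ξ u).Nonempty) :
    (σ.seq s ξ).act u = σ.act u := by
  simp only [Strategy.seq, inCharge, dif_neg h]

theorem leastHandover_mem_handovers_of_stepRel (h : (handovers σ s ξ u).Nonempty)
    (hst : stepRel (σ.seq s ξ) u t) : leastHandover σ s ξ u h ∈ handovers σ s ξ t :=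
  ⟨(leastHandover_mem h).1,
    mem_reachSet_of_stepRel (leastHandover_mem h).2 (hst.of_act_eq (seq_act_of_nonempty h))⟩

theorem exists_infiniteFrom_of_seq_path {f : ℕ → M.State}
    (hf : ∀ j, stepRel (σ.seq s ξ) (f j) (f (j + 1))) (h0 : (handovers σ s ξ (f 0)).Nonempty) :
    ∃ t ∈ CELeaf σ s, InfiniteFrom (ξ t) t := by
  have hne : ∀ k, (handovers σ s ξ (f k)).Nonempty := by
    intro k
    induction k with
    | zero => exact h0
    | succ k ih => exact ⟨_, leastHandover_mem_handovers_of_stepRel ih (hf k)⟩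
  let leader k := leastHandover σ s ξ (f k) (hne k)
  obtain ⟨k₀, hk₀⟩ := IsWellOrder.exists_forall_add_eq leader fun k =>
    not_lt_leastHandover (hne (k + 1)) (leastHandover_mem_handovers_of_stepRel (hne k) (hf k))
  have hmem := leastHandover_mem (hne k₀)
  refine ⟨leader k₀, hmem.1, InfiniteFrom.of_mem_reachSet ⟨fun k => f (k₀ + k), gsim.refl _,
    fun k => ?_⟩ hmem.2⟩
  rw [← hk₀ k]
  exact (hf (k₀ + k)).of_act_eq (seq_act_of_nonempty (hne (k₀ + k)))

theorem not_infiniteFrom_seq (hσ : ¬ InfiniteFrom σ s)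
    (hξ : ∀ t ∈ CELeaf σ s, ¬ InfiniteFrom (ξ t) t) : ¬ InfiniteFrom (σ.seq s ξ) s := by
  rintro ⟨f, h0, hf⟩
  by_cases hhand : ∃ j, (handovers σ s ξ (f j)).Nonempty
  · obtain ⟨j, hj⟩ := hhand
    obtain ⟨t, ht, hinf⟩ := exists_infiniteFrom_of_seq_path (f := fun k => f (j + k))
      (fun k => hf (j + k)) hj
    exact hξ t ht hinf
  · exact hσ ⟨f, h0, fun j =>
      (hf j).of_act_eq (seq_act_of_not_nonempty (not_exists.mp hhand j))⟩

theorem exists_mem_CELeaf_of_mem_CELeaf_seq (hu : u ∈ CELeaf (σ.seq s ξ) s) :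
    ∃ t ∈ CELeaf σ s, u ∈ CELeaf (ξ t) t := by
  obtain ⟨m, f, h0, hf, hn, hm⟩ := hu
  by_cases hhand : (handovers σ s ξ (f m)).Nonempty
  · have hmem := leastHandover_mem hhand
    refine ⟨_, hmem.1, mem_CELeaf_of_gsim (mem_CELeaf_iff.2 ⟨hmem.2, ?_⟩) hm⟩
    rwa [← seq_act_of_nonempty hhand]
  -- otherwise `f` is an execution of `σ` ending in a leaf `f m`, which is then its own handover
  have hnone : ∀ j ≤ m, ¬ (handovers σ s ξ (f j)).Nonempty := fun j hj hne =>
    hhand <| Nat.le_induction (P := fun k _ => k ≤ m → (handovers σ s ξ (f k)).Nonempty)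
      (fun _ => hne) (fun k _ ih hk => ⟨_, leastHandover_mem_handovers_of_stepRel
        (ih (by omega)) (hf k (by omega))⟩) m hj le_rfl
  have hleaf : f m ∈ CELeaf σ s := ⟨m, f, h0,
    fun j hj => (hf j hj).of_act_eq (seq_act_of_not_nonempty (hnone j hj.le)),
    (seq_act_of_not_nonempty hhand).symm.trans hn, gsim.refl _⟩
  exact (hhand ⟨f m, hleaf, mem_reachSet_self _ _⟩).elim

end Composition

section Semantics

variable {φ ψ : Formula P n}

theorem sat_imp : Sat M s (φ.imp ψ) ↔ (Sat M s φ → Sat M s ψ) := not_and_not_right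

open Classical in
theorem beval_decide_sat_iff (φ : Formula P n) :
    beval (fun χ => decide (Sat M s χ)) φ = true ↔ Sat M s φ := by
  induction φ with
  | top => simp [beval, Sat]
  | neg χ ih => simp [beval, Sat, ← ih]
  | and χ₁ χ₂ ih₁ ih₂ => simp [beval, Sat, ih₁, ih₂]
  | _ => simp [beval]

theorem sat_of_isTaut (h : IsTaut φ) : Sat M s φ := by
  classical
  exact (beval_decide_sat_iff φ).1 (h _)

theorem sat_Kh_mono {H : Grp n} (hGH : G ⊆ H) (h : Sat M s (.Kh G φ)) : Sat M s (.Kh H φ) :=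
  let ⟨σ, hleaf, hσ⟩ := h
  ⟨σ.lift hGH, fun t ht => hleaf t (CELeaf_lift_subset hGH ht), fun hinf => hσ (hinf.of_lift hGH)⟩

theorem sat_Kh_of_K (h : Sat M s (.K G φ)) : Sat M s (.Kh G φ) :=
  ⟨Strategy.empty M G, fun t ht => h t (gsim_of_mem_CELeaf_empty ht),
    fun ⟨_, _, hf⟩ => not_stepRel_empty (hf 0)⟩

theorem sat_K_of_Kh_empty (h : Sat M s (.Kh ∅ φ)) : Sat M s (.K ∅ φ) :=
  let ⟨σ, hleaf, _⟩ := h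
  fun t _ => hleaf t (mem_CELeaf_iff.2
    ⟨mem_reachSet_of_gsim (mem_reachSet_self σ s) (gsim_empty s t), σ.act_eq_none_of_empty_group t⟩)

theorem sat_K_Kh_of_Kh (h : Sat M s (.Kh G φ)) : Sat M s (.K G (.Kh G φ)) :=
  let ⟨σ, hleaf, hσ⟩ := h
  fun _ hst => ⟨σ, by rwa [← CELeaf_congr hst], (infiniteFrom_congr hst).not.1 hσ⟩

theorem sat_Kh_of_forall_imp (himp : ∀ t, Sat M t φ → Sat M t ψ) (h : Sat M s (.Kh G φ)) :
    Sat M s (.Kh G ψ) :=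
  let ⟨σ, hleaf, hσ⟩ := h
  ⟨σ, fun t ht => himp t (hleaf t ht), hσ⟩

theorem not_sat_Kh_bot : ¬ Sat M s (.Kh G .bot) := fun ⟨_, hleaf, hσ⟩ =>
  let ⟨t, ht⟩ := exists_mem_CELeaf hσ
  hleaf t ht trivial

theorem sat_Kh_K_of_Kh (h : Sat M s (.Kh G φ)) : Sat M s (.Kh G (.K G φ)) :=
  let ⟨σ, hleaf, hσ⟩ := h
  ⟨σ, fun _ ht u hu => hleaf u (mem_CELeaf_of_gsim ht hu), hσ⟩

theorem sat_Kh_of_Kh_Kh (h : Sat M s (.Kh G (.Kh G φ))) : Sat M s (.Kh G φ) := by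
  obtain ⟨σ, hleaf, hσ⟩ := h
  have : Nonempty (Strategy M G) := ⟨σ⟩
  choose! ξ hξφ hξ using hleaf
  refine ⟨σ.seq s ξ, fun u hu => ?_, not_infiniteFrom_seq hσ hξ⟩
  obtain ⟨t, ht, hut⟩ := exists_mem_CELeaf_of_mem_CELeaf_seq hu
  exact hξφ t ht u hut

end Semantics

end Soundness

/-- Soundness of SDKH: provable formulas are valid. -/
theorem soundness {P : Type} [Countable P] {n : ℕ}
    (φ : Formula P n) (h : Provable φ) :
    ∀ (M : KhModel P n) (s : M.State), Sat M s φ := by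
  induction h with
  | taut ht => exact fun _ _ => sat_of_isTaut ht
  | distK => exact fun _ _ => sat_imp.2 fun ⟨hφ, himp⟩ t ht => sat_imp.1 (himp t ht) (hφ t ht)
  | axT => exact fun _ s => sat_imp.2 fun h => h s (gsim.refl s)
  | ax4 => exact fun _ _ => sat_imp.2 fun h _ ht u hu => h u (ht.trans hu)
  | ax5 => exact fun _ _ => sat_imp.2 fun h _ ht hK => h fun u hu => hK u (ht.symm.trans hu)
  | axKMono hGH => exact fun _ _ => sat_imp.2 fun h t ht => h t (ht.mono hGH)
  | axKhMono hGH => exact fun _ _ => sat_imp.2 (sat_Kh_mono hGH)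
  | axKtoKh => exact fun _ _ => sat_imp.2 sat_Kh_of_K
  | axEmpKhtoK => exact fun _ _ => sat_imp.2 sat_K_of_Kh_empty
  | axKhtoKKh => exact fun _ _ => sat_imp.2 sat_K_Kh_of_Kh
  | axEmpMono => exact fun _ s => sat_imp.2 fun h _ _ => sat_imp.2 <|
      sat_Kh_of_forall_imp fun u => sat_imp.1 (h u (gsim_empty s u))
  | axKhbot => exact fun _ _ => sat_imp.2 fun h => absurd h not_sat_Kh_bot
  | axKhtoKhK => exact fun _ _ => sat_imp.2 sat_Kh_K_of_Kh
  | axKhKh => exact fun _ _ => sat_imp.2 sat_Kh_of_Kh_Kh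
  | mp _ _ ih₁ ih₂ => exact fun M s => sat_imp.1 (ih₁ M s) (ih₂ M s)
  | necK _ ih => exact fun M _ t _ => ih M t

end DKH
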